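/- Let T > 0, C ≥ 0, and let G : [0, T] → Mat(n, ℝ) be a continuously differentiable family of symmetric positive-definite matrices. If ∫₀^{T} √(tr((G(t)⁻¹ G'(t))²)) dt ≤ C, then for every v ∈ ℝⁿ, e^{−C}·⟨v, G(0) v⟩ ≤ ⟨v, G(T) v⟩ ≤ e^{C}·⟨v, G(0) v⟩; that is, the quadratic forms G(T) and G(0) are uniformly equivalent with constants e^{−C} and e^{C}. -/

import Mathlib

open Set Matrix intervalIntegral

attribute [local instance] Matrix.frobeniusNormedAddCommGroup Matrix.frobeniusNormedSpace

/-! Fix `v ≠ 0` and put `f t = ⟨v, G t v⟩ > 0`. Writing `G t = R²` with `R` the positive square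
root and `S = R⁻¹ G'(t) R⁻¹`, we get `f' t = ⟨R v, S (R v)⟩` and `f t = |R v|²`, while
`tr((G⁻¹ G')²) = tr(S²) = ‖S‖²` in the Frobenius norm. Cauchy–Schwarz thus gives
`|(log f)'| ≤ √(tr((G⁻¹ G')²))`, and integrating over `[0, T]` yields `|log f T - log f 0| ≤ C`. -/

namespace Matrix

variable {ι : Type*} [Fintype ι]

theorem frobenius_norm_mulVec_le {κ : Type*} [Fintype κ] (S : Matrix κ ι ℝ) (w : ι → ℝ) :
    ‖WithLp.toLp 2 (S *ᵥ w)‖ ≤ ‖S‖ * ‖WithLp.toLp 2 w‖ := by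
  rw [← frobenius_norm_replicateCol (ι := Unit), ← frobenius_norm_replicateCol (ι := Unit),
    replicateCol_mulVec]
  exact frobenius_norm_mul S _

theorem abs_dotProduct_mulVec_le_frobenius_norm_mul (S : Matrix ι ι ℝ) (w : ι → ℝ) :
    |w ⬝ᵥ S *ᵥ w| ≤ ‖S‖ * (w ⬝ᵥ w) := by
  have hww : w ⬝ᵥ w = ‖WithLp.toLp 2 w‖ ^ 2 := by
    rw [← real_inner_self_eq_norm_sq, EuclideanSpace.inner_eq_star_dotProduct]
    simp
  calc |w ⬝ᵥ S *ᵥ w| = |inner ℝ (WithLp.toLp 2 (S *ᵥ w)) (WithLp.toLp 2 w)| := by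
        rw [EuclideanSpace.inner_eq_star_dotProduct]
        simp
    _ ≤ ‖WithLp.toLp 2 (S *ᵥ w)‖ * ‖WithLp.toLp 2 w‖ := abs_real_inner_le_norm _ _
    _ ≤ ‖S‖ * ‖WithLp.toLp 2 w‖ * ‖WithLp.toLp 2 w‖ := by
        gcongr
        exact frobenius_norm_mulVec_le S w
    _ = ‖S‖ * (w ⬝ᵥ w) := by rw [hww]; ring

theorem frobenius_norm_eq_sqrt_trace_transpose_mul {κ : Type*} [Fintype κ] (S : Matrix ι κ ℝ) :
    ‖S‖ = √((Sᵀ * S).trace) := by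
  rw [frobenius_norm_def, ← Real.sqrt_eq_rpow]
  congr 1
  simp only [trace, diag, mul_apply, transpose_apply]
  rw [Finset.sum_comm]
  simp [sq]

theorem dotProduct_transpose_mul_mul_mulVec {R : Type*} [CommSemiring R] (B P : Matrix ι ι R)
    (x y : ι → R) : x ⬝ᵥ (Bᵀ * P * B) *ᵥ y = (B *ᵥ x) ⬝ᵥ P *ᵥ (B *ᵥ y) := by
  rw [← mulVec_mulVec, ← mulVec_mulVec, dotProduct_mulVec x, ← mulVec_transpose,
    transpose_transpose]

open scoped MatrixOrder in
theorem PosDef.abs_dotProduct_mulVec_le [DecidableEq ι] {A M : Matrix ι ι ℝ} (hA : A.PosDef)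
    (hM : M.IsSymm) (v : ι → ℝ) :
    |v ⬝ᵥ M *ᵥ v| ≤ √(((A⁻¹ * M) ^ 2).trace) * (v ⬝ᵥ A *ᵥ v) := by
  set R := CFC.sqrt A
  have hRR : R * R = A := CFC.sqrt_mul_sqrt_self A hA.posSemidef.nonneg
  have hR : Rᵀ = R := by simpa using (CFC.sqrt_nonneg A).posSemidef.isHermitian.eq
  have hRdet : IsUnit R.det := by
    have := (isUnit_iff_isUnit_det A).mp hA.isUnit
    rw [← hRR, det_mul] at this
    exact isUnit_of_mul_isUnit_left this
  set S := R⁻¹ * M * R⁻¹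
  have hS : Sᵀ = S := by
    simp only [S, transpose_mul, transpose_nonsing_inv, hR, hM.eq, mul_assoc]
  have hM_eq : M = Rᵀ * S * R := by
    simp only [S, hR, ← mul_assoc, mul_nonsing_inv R hRdet, one_mul]
    rw [mul_assoc, nonsing_inv_mul R hRdet, mul_one]
  have hA_eq : A = Rᵀ * 1 * R := by rw [hR, mul_one, hRR]
  have htrace : ((A⁻¹ * M) ^ 2).trace = (Sᵀ * S).trace := by
    rw [hS, ← hRR, mul_inv_rev, sq]
    simp only [S, mul_assoc]
    exact (trace_mul_comm R⁻¹ _).trans (by simp only [mul_assoc])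
  rw [htrace, ← frobenius_norm_eq_sqrt_trace_transpose_mul, hM_eq, hA_eq,
    dotProduct_transpose_mul_mul_mulVec, dotProduct_transpose_mul_mul_mulVec, one_mulVec]
  exact abs_dotProduct_mulVec_le_frobenius_norm_mul S (R *ᵥ v)

end Matrix

section MatrixCalculus

variable {ι : Type*} [Fintype ι]

theorem ContinuousOn.matrix_inv {X K : Type*} [TopologicalSpace X] [Field K] [TopologicalSpace K]
    [IsTopologicalDivisionRing K] [DecidableEq ι] {A : X → Matrix ι ι K} {s : Set X}
    (hA : ContinuousOn A s) (hdet : ∀ x ∈ s, (A x).det ≠ 0) :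
    ContinuousOn (fun x => (A x)⁻¹) s := fun x hx =>
  (continuousAt_matrix_inv _ (by rw [Ring.inverse_eq_inv']; exact continuousAt_inv₀ (hdet x hx))
    ).comp_continuousWithinAt (hA x hx)

variable {𝕜 : Type*} [NontriviallyNormedField 𝕜] [CompleteSpace 𝕜]

theorem HasDerivAt.dotProduct_mulVec {G : 𝕜 → Matrix ι ι 𝕜} {G' : Matrix ι ι 𝕜} {t : 𝕜}
    (hG : HasDerivAt G G' t) (v w : ι → 𝕜) :
    HasDerivAt (fun s => v ⬝ᵥ G s *ᵥ w) (v ⬝ᵥ G' *ᵥ w) t :=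
  let L : Matrix ι ι 𝕜 →ₗ[𝕜] 𝕜 :=
    { toFun := fun M => v ⬝ᵥ M *ᵥ w
      map_add' := fun M N => by simp only [add_mulVec, dotProduct_add]
      map_smul' := fun c M => by simp only [smul_mulVec, dotProduct_smul]; rfl }
  L.toContinuousLinearMap.hasFDerivAt.comp_hasDerivAt t hG

theorem HasDerivWithinAt.isSymm {G : 𝕜 → Matrix ι ι 𝕜} {G' : Matrix ι ι 𝕜} {s : Set 𝕜} {t : 𝕜}
    (hG : HasDerivWithinAt G G' s t) (hs : UniqueDiffWithinAt 𝕜 s t) (ht : t ∈ s)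
    (hsymm : ∀ u ∈ s, (G u).IsSymm) : G'.IsSymm := by
  have hGT : HasDerivWithinAt (fun u => (G u)ᵀ) G'ᵀ s t :=
    (transposeLinearEquiv ι ι 𝕜 𝕜).toLinearMap.toContinuousLinearMap.hasFDerivAt
      |>.comp_hasDerivWithinAt t hG
  exact hs.eq_deriv s (hGT.congr_of_mem (fun u hu => (hsymm u hu).symm) ht) hG

end MatrixCalculus

theorem abs_log_sub_log_le_integral {f f' φ : ℝ → ℝ} {a b : ℝ} (hab : a ≤ b)
    (hcont : ContinuousOn f (Icc a b)) (hderiv : ∀ t ∈ Ioo a b, HasDerivAt f (f' t) t)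
    (hpos : ∀ t ∈ Icc a b, 0 < f t) (hφ : MeasureTheory.IntegrableOn φ (Icc a b))
    (hbound : ∀ t ∈ Ioo a b, |f' t| ≤ φ t * f t) :
    |Real.log (f b) - Real.log (f a)| ≤ ∫ t in a..b, φ t := by
  have hlog_cont : ContinuousOn (fun t => Real.log (f t)) (Icc a b) :=
    hcont.log fun t ht => (hpos t ht).ne'
  have hlog_deriv : ∀ t ∈ Ioo a b, HasDerivAt (fun t => Real.log (f t)) (f' t / f t) t :=
    fun t ht => (hderiv t ht).log (hpos t (Ioo_subset_Icc_self ht)).ne'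
  have hratio : ∀ t ∈ Ioo a b, |f' t / f t| ≤ φ t := fun t ht => by
    have hft := hpos t (Ioo_subset_Icc_self ht)
    rw [abs_div, abs_of_pos hft, div_le_iff₀ hft]
    exact hbound t ht
  rw [abs_sub_le_iff]
  constructor
  · exact sub_le_integral_of_hasDeriv_right_of_le hab hlog_cont
      (fun t ht => (hlog_deriv t ht).hasDerivWithinAt) hφ
      fun t ht => (le_abs_self _).trans (hratio t ht)
  · have := sub_le_integral_of_hasDeriv_right_of_le hab hlog_cont.neg
      (fun t ht => (hlog_deriv t ht).neg.hasDerivWithinAt) hφ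
      fun t ht => (neg_le_abs _).trans (hratio t ht)
    simpa [neg_add_eq_sub] using this

theorem exp_neg_mul_le_and_le_exp_mul_of_abs_log_sub_log_le {x y C : ℝ} (hx : 0 < x)
    (hy : 0 < y) (h : |Real.log y - Real.log x| ≤ C) :
    Real.exp (-C) * x ≤ y ∧ y ≤ Real.exp C * x := by
  rw [abs_sub_le_iff] at h
  rw [← Real.exp_log hx, ← Real.exp_log hy, ← Real.exp_add, ← Real.exp_add]
  exact ⟨Real.exp_le_exp.mpr (by linarith), Real.exp_le_exp.mpr (by linarith)⟩

theorem metric_uniform_equivalence_general {n : ℕ} (T C : ℝ) (hT : 0 < T)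
    (G G' : ℝ → Matrix (Fin n) (Fin n) ℝ)
    (hderiv : ∀ t ∈ Icc 0 T, HasDerivAt G (G' t) t)
    (hcont : ContinuousOn G' (Icc 0 T))
    (hpos : ∀ t ∈ Icc 0 T, (G t).PosDef)
    (hint : (∫ t in (0 : ℝ)..T, Real.sqrt ((((G t)⁻¹ * G' t) ^ 2).trace)) ≤ C) :
    ∀ v : Fin n → ℝ,
      Real.exp (-C) * (v ⬝ᵥ (G 0).mulVec v) ≤ v ⬝ᵥ (G T).mulVec v ∧
      v ⬝ᵥ (G T).mulVec v ≤ Real.exp C * (v ⬝ᵥ (G 0).mulVec v) := by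
  intro v
  rcases eq_or_ne v 0 with rfl | hv
  · simp
  have hquad_pos : ∀ t ∈ Icc 0 T, 0 < v ⬝ᵥ G t *ᵥ v := fun t ht => by
    simpa using (hpos t ht).dotProduct_mulVec_pos hv
  have hG'_symm : ∀ t ∈ Icc 0 T, (G' t).IsSymm := fun t ht =>
    (hderiv t ht).hasDerivWithinAt.isSymm (uniqueDiffOn_Icc hT t ht) ht
      fun u hu => isHermitian_iff_isSymm.mp (hpos u hu).isHermitian
  have hG_cont : ContinuousOn G (Icc 0 T) := fun t ht =>
    (hderiv t ht).continuousAt.continuousWithinAt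
  have hrate_cont : ContinuousOn (fun t => √((((G t)⁻¹ * G' t) ^ 2).trace)) (Icc 0 T) :=
    (continuous_id.matrix_trace.comp_continuousOn
      (((hG_cont.matrix_inv fun t ht => (hpos t ht).det_pos.ne').mul hcont).pow 2)).sqrt
  refine exp_neg_mul_le_and_le_exp_mul_of_abs_log_sub_log_le (hquad_pos 0 ⟨le_rfl, hT.le⟩)
    (hquad_pos T ⟨hT.le, le_rfl⟩) (le_trans ?_ hint)
  exact abs_log_sub_log_le_integral hT.le
    (fun t ht => ((hderiv t ht).dotProduct_mulVec v v).continuousAt.continuousWithinAt)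
    (fun t ht => (hderiv t (Ioo_subset_Icc_self ht)).dotProduct_mulVec v v) hquad_pos
    hrate_cont.integrableOn_Icc
    fun t ht => (hpos t (Ioo_subset_Icc_self ht)).abs_dotProduct_mulVec_le
      (hG'_symm t (Ioo_subset_Icc_self ht)) v

/-- Let `T > 0`, `C ≥ 0`, and `G : [0,T] → Mat(n,ℝ)` a continuously differentiable family of
symmetric positive-definite matrices. If `∫₀^T √(tr((G(t)⁻¹ G'(t))²)) dt ≤ C`, then for every
`v ∈ ℝⁿ`, `e^{−C} ⟨v, G(0) v⟩ ≤ ⟨v, G(T) v⟩ ≤ e^{C} ⟨v, G(0) v⟩`. -/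
theorem metric_uniform_equivalence {n : ℕ} (T C : ℝ) (hT : 0 < T) (hC : 0 ≤ C)
    (G G' : ℝ → Matrix (Fin n) (Fin n) ℝ)
    (hderiv : ∀ t ∈ Icc 0 T, HasDerivAt G (G' t) t)
    (hcont : ContinuousOn G' (Icc 0 T))
    (hsymm : ∀ t ∈ Icc 0 T, (G t).IsSymm)
    (hpos : ∀ t ∈ Icc 0 T, (G t).PosDef)
    (hint : (∫ t in (0 : ℝ)..T, Real.sqrt ((((G t)⁻¹ * G' t) ^ 2).trace)) ≤ C) :
    ∀ v : Fin n → ℝ,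
      Real.exp (-C) * (v ⬝ᵥ (G 0).mulVec v) ≤ v ⬝ᵥ (G T).mulVec v ∧
      v ⬝ᵥ (G T).mulVec v ≤ Real.exp C * (v ⬝ᵥ (G 0).mulVec v) :=
  metric_uniform_equivalence_general T C hT G G' hderiv hcont hpos hint
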